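/- arXiv:1009.2837 — 2 statements merged into one kernel-verified Lean document; each statement's English description precedes it below -/
import Mathlib

section
/- For every t ∈ [0,T] and every q ∈ Q(t), the proximal normal cone to Q(t) at q decomposes as N(Q(t), q) = Σ_{i=1}^p N(Q_i(t), q) = − Σ_{i ∈ I(t,q)} ℝ⁺ ∇_q g_i(t,q), where I(t,q) := {i : g_i(t,q) = 0} is the active set at q. -/
/-!
Fix `t` and `q ∈ Q(t)` and write `nᵢ = ∇_q gᵢ(t,q)`. A sum of proximal normals to the sets
`Qᵢ(t)` is a proximal normal to their intersection, and by the second-order Taylor bound every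
`-λ nᵢ` with `λ ≥ 0` and `i` active is a proximal normal to `Qᵢ(t)`; this gives
`-cone ⊆ Σ N(Qᵢ) ⊆ N(Q)`. Conversely, a proximal normal `v` satisfies `⟪v, u⟫ ≤ 0` for every
direction `u` with `⟪nᵢ, u⟫ > 0` for all active `i`, because `q + s u` stays in `Q(t)` for small
`s > 0`. Together, (A1) and (A5') bound the total mass of a nonnegative combination of the
active gradients by a multiple of its norm. Hence such strict directions exist, so the inequality
extends to the whole linearized cone, and the cone generated by the active gradients is closed,
so Farkas' lemma puts `v` in `-cone`.
-/

open Set Metric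
open Classical

noncomputable section

variable {d p : ℕ}

local notation "E" => EuclideanSpace ℝ (Fin d)

/-- The set of nearest points of `S` to `x` (Euclidean projection `P_S(x)`). -/
def projSet (S : Set E) (x : E) : Set E :=
  {z | z ∈ S ∧ dist x z = infDist x S}

/-- The proximal normal cone `N(S,x)`. -/
def proxNormalCone (S : Set E) (x : E) : Set E :=
  {v | ∃ a : ℝ, 0 < a ∧ x ∈ projSet S (x + a • v)}

/-- The feasible set `Q(t) = ∩ᵢ {q | gᵢ(t,q) ≥ 0}`. -/
def Qset (g : Fin p → ℝ → E → ℝ) (t : ℝ) : Set E :=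
  {q | ∀ i, 0 ≤ g i t q}

open Filter Topology
open scoped RealInnerProductSpace

theorem Convex.abs_sub_sub_inner_le_of_norm_hessian_le {F : Type*} [NormedAddCommGroup F]
    [InnerProductSpace ℝ F] [CompleteSpace F] {f : F → ℝ} {f' : F → F} {f'' : F → F →L[ℝ] F}
    {s : Set F} {M : ℝ} {x y : F} (hs : Convex ℝ s) (hf : ∀ z ∈ s, HasGradientAt f (f' z) z)
    (hf' : ∀ z ∈ s, HasFDerivAt f' (f'' z) z) (hf'' : ∀ z ∈ s, ‖f'' z‖ ≤ M) (hx : x ∈ s)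
    (hy : y ∈ s) : |f y - f x - ⟪f' x, y - x⟫| ≤ M * ‖y - x‖ ^ 2 := by
  have hM : 0 ≤ M := (norm_nonneg _).trans (hf'' x hx)
  have hlip : ∀ z ∈ s ∩ closedBall x ‖y - x‖,
      ‖InnerProductSpace.toDual ℝ F (f' z) - InnerProductSpace.toDual ℝ F (f' x)‖ ≤
        M * ‖y - x‖ := by
    rintro z ⟨hz, hzx⟩
    rw [← map_sub, LinearIsometryEquiv.norm_map]
    calc ‖f' z - f' x‖ ≤ M * ‖z - x‖ :=
          hs.norm_image_sub_le_of_norm_hasFDerivWithin_le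
            (fun w hw => (hf' w hw).hasFDerivWithinAt) hf'' hx hz
      _ ≤ M * ‖y - x‖ := by gcongr; rwa [← dist_eq_norm, ← mem_closedBall]
  have h := (hs.inter (convex_closedBall x ‖y - x‖)).norm_image_sub_le_of_norm_hasFDerivWithin_le'
    (fun z hz => (hf z hz.1).hasFDerivAt.hasFDerivWithinAt) hlip
    ⟨hx, mem_closedBall_self (norm_nonneg _)⟩ ⟨hy, by rw [mem_closedBall, dist_eq_norm]⟩
  rwa [InnerProductSpace.toDual_apply_apply, Real.norm_eq_abs, mul_assoc, ← sq] at h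

lemma mem_projSet_iff {S : Set E} {x z : E} :
    z ∈ projSet S x ↔ z ∈ S ∧ ∀ y ∈ S, dist x z ≤ dist x y := by
  refine ⟨fun ⟨hz, h⟩ => ⟨hz, fun y hy => h ▸ infDist_le_dist_of_mem hy⟩, fun ⟨hz, h⟩ => ⟨hz, ?_⟩⟩
  exact ((le_infDist ⟨z, hz⟩).2 fun y hy => h y hy).antisymm (infDist_le_dist_of_mem hz)

lemma dist_add_smul_self_le_iff {q v y : E} {α : ℝ} (hα : 0 < α) :
    dist (q + α • v) q ≤ dist (q + α • v) y ↔ 2 * α * ⟪v, y - q⟫ ≤ ‖y - q‖ ^ 2 := by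
  rw [← pow_le_pow_iff_left₀ dist_nonneg dist_nonneg two_ne_zero, dist_eq_norm, dist_eq_norm,
    add_sub_cancel_left, show q + α • v - y = α • v - (y - q) by abel, norm_sub_sq_real,
    real_inner_smul_left, norm_smul, Real.norm_eq_abs, abs_of_pos hα]
  constructor <;> intro h <;> linarith

theorem mem_proxNormalCone_iff {S : Set E} {q v : E} :
    v ∈ proxNormalCone S q ↔
      q ∈ S ∧ ∃ σ, 0 ≤ σ ∧ ∀ y ∈ S, ⟪v, y - q⟫ ≤ σ * ‖y - q‖ ^ 2 := by
  simp only [proxNormalCone, Set.mem_ofPred_eq, mem_projSet_iff]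
  constructor
  · rintro ⟨α, hα, hq, h⟩
    refine ⟨hq, 1 / (2 * α), by positivity, fun y hy => ?_⟩
    have := (dist_add_smul_self_le_iff hα).1 (h y hy)
    rw [div_mul_eq_mul_div, le_div_iff₀ (by positivity)]
    linarith
  · rintro ⟨hq, σ, hσ, h⟩
    refine ⟨1 / (2 * (σ + 1)), by positivity, hq, fun y hy => ?_⟩
    rw [dist_add_smul_self_le_iff (by positivity)]
    have hy := h y hy
    have hσ' : 2 * (1 / (2 * (σ + 1))) * σ ≤ 1 := by
      rw [show 2 * (1 / (2 * (σ + 1))) * σ = σ / (σ + 1) by field_simp,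
        div_le_one (by positivity)]
      linarith
    nlinarith [sq_nonneg ‖y - q‖, show (0 : ℝ) < 1 / (2 * (σ + 1)) by positivity]

theorem mem_proxNormalCone_of_forall_mem_ball {S : Set E} {q v : E} {r C : ℝ} (hq : q ∈ S)
    (hr : 0 < r) (h : ∀ y ∈ S, y ∈ ball q r → ⟪v, y - q⟫ ≤ C * ‖y - q‖ ^ 2) :
    v ∈ proxNormalCone S q := by
  refine mem_proxNormalCone_iff.2 ⟨hq, max C (‖v‖ / r), by positivity, fun y hy => ?_⟩
  by_cases hyr : y ∈ ball q r
  · exact (h y hy hyr).trans (by gcongr; exact le_max_left _ _)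
  · have hr' : r ≤ ‖y - q‖ := by rwa [mem_ball, dist_eq_norm, not_lt] at hyr
    calc ⟪v, y - q⟫ ≤ ‖v‖ / r * r * ‖y - q‖ := by
          rw [div_mul_cancel₀ _ hr.ne']; exact real_inner_le_norm _ _
      _ ≤ ‖v‖ / r * ‖y - q‖ * ‖y - q‖ := by rw [mul_right_comm]; gcongr
      _ ≤ max C (‖v‖ / r) * ‖y - q‖ ^ 2 := by rw [mul_assoc, ← sq]; gcongr; exact le_max_right _ _

theorem sum_mem_proxNormalCone_iInter {ι : Type*} [Fintype ι] {S : ι → Set E} {q : E}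
    {v : ι → E} (hv : ∀ i, v i ∈ proxNormalCone (S i) q) :
    ∑ i, v i ∈ proxNormalCone (⋂ i, S i) q := by
  choose hq σ hσ h using fun i => mem_proxNormalCone_iff.1 (hv i)
  refine mem_proxNormalCone_iff.2 ⟨mem_iInter.2 hq, ∑ i, σ i, Finset.sum_nonneg fun i _ => hσ i,
    fun y hy => ?_⟩
  rw [sum_inner, Finset.sum_mul]
  exact Finset.sum_le_sum fun i _ => h i y (mem_iInter.1 hy i)

theorem inner_nonpos_of_eventually_add_smul_mem {S : Set E} {q v u : E}
    (hv : v ∈ proxNormalCone S q) (hu : ∀ᶠ s in 𝓝[>] (0 : ℝ), q + s • u ∈ S) : ⟪v, u⟫ ≤ 0 := by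
  obtain ⟨-, σ, -, h⟩ := mem_proxNormalCone_iff.1 hv
  have hc : Continuous fun s : ℝ => σ * s * ‖u‖ ^ 2 := by fun_prop
  have hlim : Tendsto (fun s : ℝ => σ * s * ‖u‖ ^ 2) (𝓝[>] 0) (𝓝 0) :=
    (hc.tendsto' 0 0 (by simp)).mono_left nhdsWithin_le_nhds
  refine ge_of_tendsto hlim ?_
  filter_upwards [hu, self_mem_nhdsWithin] with s hs hs0
  have := h _ hs
  rw [add_sub_cancel_left, real_inner_smul_right, norm_smul, Real.norm_eq_abs, mul_pow, sq_abs]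
    at this
  have hs0 : 0 < s := hs0
  nlinarith

theorem IsClosed.image_of_norm_le_mul_norm {X Y : Type*} [SeminormedAddCommGroup X]
    [ProperSpace X] [NormedAddCommGroup Y] {L : X → Y} (hL : Continuous L) {C : Set X}
    (hC : IsClosed C) {κ : ℝ} (h : ∀ x ∈ C, ‖x‖ ≤ κ * ‖L x‖) : IsClosed (L '' C) := by
  refine isClosed_of_closure_subset fun y hy => ?_
  set R := ‖y‖ + 1
  have hcpt : IsCompact (L '' (C ∩ closedBall 0 (|κ| * R))) :=
    ((isCompact_closedBall 0 _).inter_left hC).image hL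
  have hsub : ball 0 R ∩ L '' C ⊆ L '' (C ∩ closedBall 0 (|κ| * R)) := by
    rintro _ ⟨hxR, x, hx, rfl⟩
    refine ⟨x, ⟨hx, ?_⟩, rfl⟩
    rw [mem_ball_zero_iff] at hxR
    rw [mem_closedBall_zero_iff]
    exact (h x hx).trans (mul_le_mul (le_abs_self κ) hxR.le (norm_nonneg _) (abs_nonneg κ))
  have hyR : y ∈ closure (ball 0 R ∩ L '' C) :=
    isOpen_ball.inter_closure ⟨by simp [R], hy⟩
  exact image_mono inter_subset_left (hcpt.isClosed.closure_subset_iff.2 hsub hyR)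

section Cone

variable {F : Type*} [NormedAddCommGroup F] [InnerProductSpace ℝ F] {ι : Type*}

theorem exists_inner_lt_of_notMem [CompleteSpace F] {K : Set F} {x : F} (hK : Convex ℝ K)
    (hKc : IsClosed K) (hx : x ∉ K) : ∃ y u, ⟪x, y⟫ < u ∧ ∀ k ∈ K, u < ⟪k, y⟫ := by
  obtain ⟨f, u, hfx, hfK⟩ := geometric_hahn_banach_point_closed hK hKc hx
  refine ⟨(InnerProductSpace.toDual ℝ F).symm f, u, ?_, fun k hk => ?_⟩ <;>
    rw [real_inner_comm, InnerProductSpace.toDual_symm_apply]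
  · exact hfx
  · exact hfK k hk

theorem inner_nonpos_of_forall_inner_pos {n : ι → F} {s : Set ι} {w v u : F}
    (hw : ∀ i ∈ s, 0 < ⟪n i, w⟫) (hv : ∀ u, (∀ i ∈ s, 0 < ⟪n i, u⟫) → ⟪v, u⟫ ≤ 0)
    (hu : ∀ i ∈ s, 0 ≤ ⟪n i, u⟫) : ⟪v, u⟫ ≤ 0 := by
  have hc : Continuous fun ε : ℝ => ⟪v, u + ε • w⟫ := by fun_prop
  refine le_of_tendsto
    ((hc.tendsto' 0 _ (by simp)).mono_left (nhdsWithin_le_nhds (s := Ioi 0))) ?_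
  filter_upwards [self_mem_nhdsWithin] with ε (hε : 0 < ε)
  refine hv _ fun i hi => ?_
  rw [inner_add_right, real_inner_smul_right]
  nlinarith [hu i hi, hw i hi]

def nonnegCoeffs (s : Set ι) : Set (ι → ℝ) :=
  {c | (∀ i, 0 ≤ c i) ∧ ∀ i ∉ s, c i = 0}

lemma isClosed_nonnegCoeffs (s : Set ι) : IsClosed (nonnegCoeffs s) := by
  simp only [nonnegCoeffs, ofPred_and, ofPred_forall]
  exact (isClosed_iInter fun i => isClosed_le continuous_const (continuous_apply i)).inter
    (isClosed_iInter fun i => isClosed_iInter fun _ => isClosed_eq (continuous_apply i)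
      continuous_const)

lemma convex_nonnegCoeffs (s : Set ι) : Convex ℝ (nonnegCoeffs s) := by
  rintro c ⟨hc0, hcs⟩ c' ⟨hc0', hcs'⟩ a b ha hb -
  refine ⟨fun i => ?_, fun i hi => ?_⟩
  · simp only [Pi.add_apply, Pi.smul_apply, smul_eq_mul]
    have := hc0 i; have := hc0' i; positivity
  · simp [hcs i hi, hcs' i hi]

lemma single_mem_nonnegCoeffs [DecidableEq ι] {s : Set ι} {i : ι} (hi : i ∈ s) {t : ℝ}
    (ht : 0 ≤ t) : Pi.single i t ∈ nonnegCoeffs s := by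
  refine ⟨fun j => ?_, fun j hj => Pi.single_eq_of_ne (ne_of_mem_of_not_mem hi hj).symm _⟩
  rcases eq_or_ne j i with rfl | hj
  · simpa
  · simp [hj]

lemma norm_le_sum_of_mem_nonnegCoeffs [Fintype ι] {s : Set ι} {c : ι → ℝ}
    (hc : c ∈ nonnegCoeffs s) : ‖c‖ ≤ ∑ i, c i :=
  (pi_norm_le_iff_of_nonneg (Finset.sum_nonneg fun i _ => hc.1 i)).2 fun i => by
    rw [Real.norm_of_nonneg (hc.1 i)]
    exact Finset.single_le_sum (fun j _ => hc.1 j) (Finset.mem_univ i)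

variable [Fintype ι] {n : ι → F} {s : Set ι} {κ : ℝ}

lemma isClosed_image_linearCombination
    (hκ : ∀ c ∈ nonnegCoeffs s, ∑ i, c i ≤ κ * ‖∑ i, c i • n i‖) {C : Set (ι → ℝ)}
    (hC : IsClosed C) (hCs : C ⊆ nonnegCoeffs s) :
    IsClosed (Fintype.linearCombination ℝ n '' C) :=
  hC.image_of_norm_le_mul_norm (LinearMap.continuous_of_finiteDimensional _) fun c hc =>
    (norm_le_sum_of_mem_nonnegCoeffs (hCs hc)).trans (hκ c (hCs hc))

theorem exists_forall_inner_pos [CompleteSpace F]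
    (hκ : ∀ c ∈ nonnegCoeffs s, ∑ i, c i ≤ κ * ‖∑ i, c i • n i‖) :
    ∃ w, ∀ i ∈ s, 0 < ⟪n i, w⟫ := by
  set C := nonnegCoeffs s ∩ {c | 1 ≤ ∑ i, c i}
  have hC : IsClosed C := (isClosed_nonnegCoeffs s).inter
    (isClosed_le continuous_const (continuous_finsetSum _ fun i _ => continuous_apply i))
  have hconv : Convex ℝ C := (convex_nonnegCoeffs s).inter
    (convex_halfSpace_ge (f := fun c : ι → ℝ => ∑ i, c i) (by constructor <;> intros <;>
      simp [Finset.sum_add_distrib, Finset.mul_sum]) 1)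
  have h0 : (0 : F) ∉ Fintype.linearCombination ℝ n '' C := by
    rintro ⟨c, ⟨hc, hc1⟩, hc0⟩
    have := hκ c hc
    rw [← Fintype.linearCombination_apply, hc0, norm_zero, mul_zero] at this
    exact absurd (hc1.trans this) (by norm_num)
  obtain ⟨w, u, hu0, hw⟩ := exists_inner_lt_of_notMem (hconv.linear_image _)
    (isClosed_image_linearCombination hκ hC inter_subset_left) h0
  refine ⟨w, fun i hi => ?_⟩
  have := hw (n i) ⟨Pi.single i 1, ⟨single_mem_nonnegCoeffs hi zero_le_one, by simp⟩, by simp⟩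
  rw [inner_zero_left] at hu0
  linarith

/-- Farkas' lemma; the coercivity bound makes the generated cone closed. -/
theorem exists_mem_nonnegCoeffs_of_inner_nonpos [CompleteSpace F]
    (hκ : ∀ c ∈ nonnegCoeffs s, ∑ i, c i ≤ κ * ‖∑ i, c i • n i‖) {v : F}
    (hv : ∀ u, (∀ i ∈ s, 0 ≤ ⟪n i, u⟫) → ⟪v, u⟫ ≤ 0) :
    ∃ c ∈ nonnegCoeffs s, v = -∑ i, c i • n i := by
  by_contra! hvK
  have hnotMem : -v ∉ Fintype.linearCombination ℝ n '' nonnegCoeffs s := by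
    rintro ⟨c, hc, hcv⟩
    exact hvK c hc (by rw [← Fintype.linearCombination_apply, hcv, neg_neg])
  obtain ⟨y, u, hvu, hy⟩ := exists_inner_lt_of_notMem ((convex_nonnegCoeffs s).linear_image _)
    (isClosed_image_linearCombination hκ (isClosed_nonnegCoeffs s) subset_rfl) hnotMem
  have hu : u < 0 := by simpa using hy 0 ⟨0, ⟨fun _ => le_rfl, fun _ _ => rfl⟩, map_zero _⟩
  have hny : ∀ i ∈ s, 0 ≤ ⟪n i, y⟫ := by
    intro i hi
    by_contra! hneg
    have := hy ((u / ⟪n i, y⟫) • n i) ⟨Pi.single i (u / ⟪n i, y⟫),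
      single_mem_nonnegCoeffs hi (div_nonneg_of_nonpos hu.le hneg.le), by simp⟩
    rw [real_inner_smul_left, div_mul_cancel₀ _ hneg.ne] at this
    exact this.false
  have := hv y hny
  rw [inner_neg_left] at hvu
  linarith

end Cone

section Constraints

theorem neg_smul_mem_proxNormalCone_of_abs_le {f : E → ℝ} {n q : E} {r M c : ℝ} (hq : 0 ≤ f q)
    (hr : 0 < r) (hf : ∀ y ∈ ball q r, |f y - f q - ⟪n, y - q⟫| ≤ M * ‖y - q‖ ^ 2)
    (hc : 0 ≤ c) (hcf : c * f q = 0) : -(c • n) ∈ proxNormalCone {y | 0 ≤ f y} q := by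
  refine mem_proxNormalCone_of_forall_mem_ball (C := c * M) hq hr fun y (hy : 0 ≤ f y) hyr => ?_
  rw [inner_neg_left, real_inner_smul_left]
  nlinarith [mul_le_mul_of_nonneg_left (abs_le.1 (hf y hyr)).2 hc, mul_nonneg hc hy]

theorem eventually_nonneg_add_smul {f : E → ℝ} {n q u : E} {r M : ℝ} (hq : 0 ≤ f q)
    (hr : 0 < r) (hf : ∀ y ∈ ball q r, |f y - f q - ⟪n, y - q⟫| ≤ M * ‖y - q‖ ^ 2)
    (hu : f q = 0 → 0 < ⟪n, u⟫) : ∀ᶠ s in 𝓝[>] (0 : ℝ), 0 ≤ f (q + s • u) := by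
  have hball : ∀ᶠ s in 𝓝[>] (0 : ℝ), q + s • u ∈ ball q r := by
    have hc : Continuous fun s : ℝ => q + s • u := by fun_prop
    exact ((hc.tendsto' 0 q (by simp)).mono_left nhdsWithin_le_nhds).eventually
      (ball_mem_nhds q hr)
  have hlower : ∀ᶠ s in 𝓝[>] (0 : ℝ), 0 ≤ f q + s * (⟪n, u⟫ - M * s * ‖u‖ ^ 2) := by
    by_cases hnu : 0 < ⟪n, u⟫
    · have hc : Continuous fun s : ℝ => ⟪n, u⟫ - M * s * ‖u‖ ^ 2 := by fun_prop
      filter_upwards [((hc.tendsto' 0 _ (by simp)).mono_left nhdsWithin_le_nhds).eventually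
        (lt_mem_nhds hnu), self_mem_nhdsWithin] with s hs (hs0 : 0 < s)
      positivity
    · have hfq : 0 < f q := hq.lt_of_ne' fun h => hnu (hu h)
      have hc : Continuous fun s : ℝ => f q + s * (⟪n, u⟫ - M * s * ‖u‖ ^ 2) := by fun_prop
      exact ((hc.tendsto' 0 _ (by simp)).mono_left nhdsWithin_le_nhds).eventually
        (lt_mem_nhds hfq) |>.mono fun s hs => hs.le
  filter_upwards [hball, hlower] with s hs hs'
  have := abs_le.1 (hf _ hs)
  rw [add_sub_cancel_left, real_inner_smul_right, norm_smul, Real.norm_eq_abs, mul_pow, sq_abs]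
    at this
  nlinarith [this.1]

theorem exists_mem_nonnegCoeffs_of_mem_proxNormalCone {ι : Type*} [Fintype ι] {f : ι → E → ℝ}
    {n : ι → E} {q v : E} {r M κ : ℝ} (hq : ∀ i, 0 ≤ f i q) (hr : 0 < r)
    (hf : ∀ i, ∀ y ∈ ball q r, |f i y - f i q - ⟪n i, y - q⟫| ≤ M * ‖y - q‖ ^ 2)
    (hκ : ∀ c ∈ nonnegCoeffs {i | f i q = 0}, ∑ i, c i ≤ κ * ‖∑ i, c i • n i‖)
    (hv : v ∈ proxNormalCone {y | ∀ i, 0 ≤ f i y} q) :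
    ∃ c ∈ nonnegCoeffs {i | f i q = 0}, v = -∑ i, c i • n i := by
  obtain ⟨w, hw⟩ := exists_forall_inner_pos hκ
  have hstrict : ∀ u, (∀ i ∈ {i | f i q = 0}, 0 < ⟪n i, u⟫) → ⟪v, u⟫ ≤ 0 := fun u hu =>
    inner_nonpos_of_eventually_add_smul_mem hv
      (eventually_all.2 fun i => eventually_nonneg_add_smul (hq i) hr (hf i) (hu i))
  exact exists_mem_nonnegCoeffs_of_inner_nonpos hκ fun u hu =>
    inner_nonpos_of_forall_inner_pos hw hstrict hu

end Constraints

theorem sum_le_div_mul_norm_sum_smul {F ι : Type*} [NormedAddCommGroup F] [NormedSpace ℝ F]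
    [Fintype ι] {n : ι → F} {P : ι → Prop} [DecidablePred P] {a γ : ℝ} (ha : 0 < a)
    (hn : ∀ i, a ≤ ‖n i‖)
    (hγ : ∀ c : ι → ℝ, (∀ i, 0 ≤ c i) →
      ∑ i, (if P i then c i * ‖n i‖ else 0) ≤ γ * ‖∑ i, (if P i then c i • n i else 0)‖) :
    ∀ c ∈ nonnegCoeffs {i | P i}, ∑ i, c i ≤ γ / a * ‖∑ i, c i • n i‖ := by
  rintro c ⟨hc0, hcP⟩
  have hite : ∀ i, (if P i then c i • n i else 0) = c i • n i ∧
      (if P i then c i * ‖n i‖ else 0) = c i * ‖n i‖ := fun i => by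
    by_cases h : P i <;> simp [h, hcP i]
  have h := hγ c hc0
  simp only [fun i => (hite i).1, fun i => (hite i).2] at h
  rw [div_mul_eq_mul_div, le_div_iff₀ ha, Finset.sum_mul]
  exact (Finset.sum_le_sum fun i _ => mul_le_mul_of_nonneg_left (hn i) (hc0 i)).trans h

theorem proximal_normal_cone_decomposition_general
    (T : ℝ)
    (g : Fin p → ℝ → E → ℝ)
    (G : Fin p → ℝ → E → E)            -- spatial gradients ∇_q gᵢ
    (Hess : Fin p → ℝ → E → (E →L[ℝ] E))  -- spatial Hessians D²_q gᵢ
    (U : Fin p → ℝ → Set E)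
    (a b M ga : ℝ)
    -- Uᵢ(t) open with Qᵢ(t) ⊆ Uᵢ(t)
    (hUopen : ∀ i, ∀ t ∈ Icc (0:ℝ) T, IsOpen (U i t))
    (hQU : ∀ i, ∀ t ∈ Icc (0:ℝ) T, {q : E | 0 ≤ g i t q} ⊆ U i t)
    -- gᵢ(t,·) ∈ C²(Uᵢ(t)) with gradient G and Hessian Hess
    (hgrad : ∀ i, ∀ t ∈ Icc (0:ℝ) T, ∀ q ∈ U i t, HasGradientAt (g i t) (G i t q) q)
    (hhess : ∀ i, ∀ t ∈ Icc (0:ℝ) T, ∀ q ∈ U i t, HasFDerivAt (G i t) (Hess i t q) q)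
    -- (A1)
    (ha : 0 < a)
    (hA1 : ∀ i, ∀ t ∈ Icc (0:ℝ) T, ∀ q ∈ U i t, a ≤ ‖G i t q‖ ∧ ‖G i t q‖ ≤ b)
    -- (A4)
    (hA4 : ∀ i, ∀ t ∈ Icc (0:ℝ) T, ∀ q ∈ U i t, ‖Hess i t q‖ ≤ M)
    -- (A5')
    (hA5' : ∀ t ∈ Icc (0:ℝ) T, ∀ q ∈ Qset g t, ∀ lam : Fin p → ℝ, (∀ i, 0 ≤ lam i) →
      ∑ i, (if g i t q = 0 then lam i * ‖G i t q‖ else 0) ≤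
        ga * ‖∑ i, (if g i t q = 0 then lam i • G i t q else (0:E))‖)
    : ∀ t ∈ Icc (0:ℝ) T, ∀ q ∈ Qset g t,
      proxNormalCone (Qset g t) q =
        {x : E | ∃ v : Fin p → E,
          (∀ i, v i ∈ proxNormalCone {y : E | 0 ≤ g i t y} q) ∧ x = ∑ i, v i} ∧
      proxNormalCone (Qset g t) q =
        {x : E | ∃ lam : Fin p → ℝ, (∀ i, 0 ≤ lam i) ∧ (∀ i, g i t q ≠ 0 → lam i = 0) ∧
          x = -∑ i, lam i • G i t q} := by
  intro t ht q hq
  set cone := {x : E | ∃ lam : Fin p → ℝ, (∀ i, 0 ≤ lam i) ∧ (∀ i, g i t q ≠ 0 → lam i = 0) ∧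
    x = -∑ i, lam i • G i t q}
  set sumN := {x : E | ∃ v : Fin p → E,
    (∀ i, v i ∈ proxNormalCone {y : E | 0 ≤ g i t y} q) ∧ x = ∑ i, v i}
  have hqU : ∀ i, q ∈ U i t := fun i => hQU i t ht (hq i)
  obtain ⟨r, hr, hrU⟩ := Metric.isOpen_iff.1
    (isOpen_iInter_of_finite fun i => hUopen i t ht) q (mem_iInter.2 hqU)
  have htaylor : ∀ i, ∀ y ∈ ball q r,
      |g i t y - g i t q - ⟪G i t q, y - q⟫| ≤ M * ‖y - q‖ ^ 2 := fun i y hy =>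
    have hU : ball q r ⊆ U i t := hrU.trans (iInter_subset _ i)
    (convex_ball q r).abs_sub_sub_inner_le_of_norm_hessian_le
      (fun z hz => hgrad i t ht z (hU hz)) (fun z hz => hhess i t ht z (hU hz))
      (fun z hz => hA4 i t ht z (hU hz)) (mem_ball_self hr) hy
  have hκ := sum_le_div_mul_norm_sum_smul ha (fun i => (hA1 i t ht q (hqU i)).1) (hA5' t ht q hq)
  have hN_cone : proxNormalCone (Qset g t) q ⊆ cone := fun v hv => by
    obtain ⟨c, ⟨hc0, hcs⟩, hcv⟩ :=
      exists_mem_nonnegCoeffs_of_mem_proxNormalCone (f := fun i => g i t) hq hr htaylor hκ hv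
    exact ⟨c, hc0, hcs, hcv⟩
  have hcone_sumN : cone ⊆ sumN := by
    rintro _ ⟨c, hc0, hcs, rfl⟩
    refine ⟨fun i => -(c i • G i t q), fun i => ?_, (Finset.sum_neg_distrib _).symm⟩
    refine neg_smul_mem_proxNormalCone_of_abs_le (hq i) hr (htaylor i) (hc0 i) ?_
    by_cases h : g i t q = 0 <;> simp [h, hcs i]
  have hsumN_N : sumN ⊆ proxNormalCone (Qset g t) q := by
    rintro _ ⟨v, hv, rfl⟩
    rw [Qset, ofPred_forall]
    exact sum_mem_proxNormalCone_iInter hv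
  exact ⟨(hN_cone.trans hcone_sumN).antisymm hsumN_N,
    hN_cone.antisymm (hcone_sumN.trans hsumN_N)⟩

/-- for every `t ∈ [0,T]` and `q ∈ Q(t)`, the proximal normal cone to
`Q(t)` at `q` decomposes as `N(Q(t),q) = Σᵢ N(Qᵢ(t),q) = -Σ_{i ∈ I(t,q)} ℝ⁺ ∇gᵢ(t,q)`,
where `I(t,q)` is the active set. -/
theorem proximal_normal_cone_decomposition
    (T : ℝ) (hT : 0 < T) (hd : 1 ≤ d) (hp : 1 ≤ p)
    (g : Fin p → ℝ → E → ℝ)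
    (G : Fin p → ℝ → E → E)            -- spatial gradients ∇_q gᵢ
    (Hess : Fin p → ℝ → E → (E →L[ℝ] E))  -- spatial Hessians D²_q gᵢ
    (U : Fin p → ℝ → Set E)
    (a b M ga : ℝ)
    -- gᵢ convex in the second variable, Q(t) nonempty
    (hconv : ∀ i, ∀ t ∈ Icc (0:ℝ) T, ConvexOn ℝ univ (g i t))
    (hQne : ∀ t ∈ Icc (0:ℝ) T, (Qset g t).Nonempty)
    -- Uᵢ(t) open with Qᵢ(t) ⊆ Uᵢ(t)
    (hUopen : ∀ i, ∀ t ∈ Icc (0:ℝ) T, IsOpen (U i t))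
    (hQU : ∀ i, ∀ t ∈ Icc (0:ℝ) T, {q : E | 0 ≤ g i t q} ⊆ U i t)
    -- gᵢ(t,·) ∈ C²(Uᵢ(t)) with gradient G and Hessian Hess
    (hgrad : ∀ i, ∀ t ∈ Icc (0:ℝ) T, ∀ q ∈ U i t, HasGradientAt (g i t) (G i t q) q)
    (hhess : ∀ i, ∀ t ∈ Icc (0:ℝ) T, ∀ q ∈ U i t, HasFDerivAt (G i t) (Hess i t q) q)
    (hhesscont : ∀ i, ∀ t ∈ Icc (0:ℝ) T, ContinuousOn (Hess i t) (U i t))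
    -- (A1)
    (ha : 0 < a) (hb : 0 < b) (hM : 0 < M)
    (hA1 : ∀ i, ∀ t ∈ Icc (0:ℝ) T, ∀ q ∈ U i t, a ≤ ‖G i t q‖ ∧ ‖G i t q‖ ≤ b)
    -- (A4)
    (hA4 : ∀ i, ∀ t ∈ Icc (0:ℝ) T, ∀ q ∈ U i t, ‖Hess i t q‖ ≤ M)
    -- (A5')
    (hga : 1 ≤ ga)
    (hA5' : ∀ t ∈ Icc (0:ℝ) T, ∀ q ∈ Qset g t, ∀ lam : Fin p → ℝ, (∀ i, 0 ≤ lam i) →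
      ∑ i, (if g i t q = 0 then lam i * ‖G i t q‖ else 0) ≤
        ga * ‖∑ i, (if g i t q = 0 then lam i • G i t q else (0:E))‖)
    : ∀ t ∈ Icc (0:ℝ) T, ∀ q ∈ Qset g t,
      proxNormalCone (Qset g t) q =
        {x : E | ∃ v : Fin p → E,
          (∀ i, v i ∈ proxNormalCone {y : E | 0 ≤ g i t y} q) ∧ x = ∑ i, v i} ∧
      proxNormalCone (Qset g t) q =
        {x : E | ∃ lam : Fin p → ℝ, (∀ i, 0 ≤ lam i) ∧ (∀ i, g i t q ≠ 0 → lam i = 0) ∧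
          x = -∑ i, lam i • G i t q} :=
  proximal_normal_cone_decomposition_general T g G Hess U a b M ga hUopen hQU hgrad hhess ha hA1 hA4
    hA5'
end
end

section
/- Let Qc_i(t, q̃) := {q̂ ∈ ℝ^d : g_i(t, q̃) + ⟨∇_q g_i(t, q̃), q̂ − q̃⟩ ≥ 0}. Under assumptions (A1) and (A4), for all t ∈ [0,T], all q ∈ Q(t), all q̃ ∈ U(t) (with the segment [q̃, q] contained in U_i(t)) and all i ∈ {1,…,p}, the distance from q to the linearized constraint set satisfies the quadratic bound d_{Qc_i(t,q̃)}(q) ≤ (M/(2α)) |q − q̃|². -/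
open Set Metric
open Classical

noncomputable section

variable {d p : ℕ}

local notation "E" => EuclideanSpace ℝ (Fin d)

/-- The linearized (half-space) constraint set
`Qcᵢ(t,q) = {q' | gᵢ(t,q) + ⟨∇gᵢ(t,q), q' - q⟩ ≥ 0}`. -/
def Qci (g : Fin p → ℝ → E → ℝ) (G : Fin p → ℝ → E → E)
    (i : Fin p) (t : ℝ) (q : E) : Set E :=
  {q' | 0 ≤ g i t q + (inner ℝ (G i t q) (q' - q) : ℝ)}

/-- The inner convex approximation `Qc(t,q) = ∩ᵢ Qcᵢ(t,q)`. -/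
def Qc (g : Fin p → ℝ → E → ℝ) (G : Fin p → ℝ → E → E) (t : ℝ) (q : E) : Set E :=
  ⋂ i, Qci g G i t q

/-!
The Hessian bound makes `∇gᵢ(t,·)` `M`-Lipschitz on the segment `[q̃, q]`, so the descent lemma
gives `gᵢ(t,q) ≤ gᵢ(t,q̃) + ⟨∇gᵢ(t,q̃), q - q̃⟩ + M/2 |q - q̃|²`. Since `gᵢ(t,q) ≥ 0`, the affine
constraint defining `Qcᵢ(t,q̃)` is violated at `q` by at most `M/2 |q - q̃|²`, and moving `q` in the
direction `∇gᵢ(t,q̃)` by that amount divided by `|∇gᵢ(t,q̃)| ≥ α` reaches the half-space.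
-/

section

open scoped InnerProductSpace

variable {F : Type*} [NormedAddCommGroup F] [InnerProductSpace ℝ F]

theorem le_add_deriv_add_of_deriv_le {φ φ' : ℝ → ℝ} {K : ℝ}
    (hφ : ∀ s ∈ Icc (0:ℝ) 1, HasDerivAt φ (φ' s) s)
    (hK : ∀ s ∈ Icc (0:ℝ) 1, φ' s ≤ φ' 0 + K * s) :
    φ 1 ≤ φ 0 + φ' 0 + K / 2 := by
  set B : ℝ → ℝ := fun s => φ 0 + φ' 0 * s + K / 2 * s ^ 2
  have hB : ∀ s, HasDerivAt B (φ' 0 + K * s) s := fun s =>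
    ((((hasDerivAt_id' s).const_mul (φ' 0)).const_add (φ 0)).add
      ((hasDerivAt_pow 2 s).const_mul (K / 2))).congr_deriv (by norm_num; ring)
  have hφB : φ 1 ≤ B 1 :=
    image_le_of_deriv_right_le_deriv_boundary
      (fun s hs => (hφ s hs).continuousAt.continuousWithinAt)
      (fun s hs => (hφ s (Ico_subset_Icc_self hs)).hasDerivWithinAt)
      (by simp [B])
      (fun s _ => (hB s).continuousAt.continuousWithinAt)
      (fun s _ => (hB s).hasDerivWithinAt)
      (fun s hs => hK s (Ico_subset_Icc_self hs))
      (right_mem_Icc.2 zero_le_one)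
  simpa [B] using hφB

/-- The descent lemma. -/
theorem le_add_inner_add_of_norm_gradient_sub_le [CompleteSpace F] {f : F → ℝ} {f' : F → F}
    {x y : F} {L : ℝ}
    (hf : ∀ z ∈ segment ℝ x y, HasGradientAt f (f' z) z)
    (hL : ∀ z ∈ segment ℝ x y, ‖f' z - f' x‖ ≤ L * ‖z - x‖) :
    f y ≤ f x + ⟪f' x, y - x⟫_ℝ + L / 2 * ‖y - x‖ ^ 2 := by
  set v := y - x
  have hmem : ∀ s ∈ Icc (0:ℝ) 1, x + s • v ∈ segment ℝ x y := fun s hs => by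
    rw [segment_eq_image']
    exact ⟨s, hs, rfl⟩
  have hderiv : ∀ s ∈ Icc (0:ℝ) 1,
      HasDerivAt (fun s : ℝ => f (x + s • v)) ⟪f' (x + s • v), v⟫_ℝ s := fun s hs => by
    have hline : HasDerivAt (fun s : ℝ => x + s • v) v s := by
      simpa using ((hasDerivAt_id s).smul_const v).const_add x
    exact (hf _ (hmem s hs)).hasFDerivAt.comp_hasDerivAt s hline
  have hslope : ∀ s ∈ Icc (0:ℝ) 1,
      ⟪f' (x + s • v), v⟫_ℝ ≤ ⟪f' (x + (0:ℝ) • v), v⟫_ℝ + L * ‖v‖ ^ 2 * s := fun s hs => by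
    have hstep : ‖x + s • v - x‖ = s * ‖v‖ := by
      rw [add_sub_cancel_left, norm_smul, Real.norm_of_nonneg hs.1]
    calc ⟪f' (x + s • v), v⟫_ℝ = ⟪f' x, v⟫_ℝ + ⟪f' (x + s • v) - f' x, v⟫_ℝ := by
          rw [inner_sub_left]; ring
      _ ≤ ⟪f' x, v⟫_ℝ + ‖f' (x + s • v) - f' x‖ * ‖v‖ := by
          gcongr; exact real_inner_le_norm _ _
      _ ≤ ⟪f' x, v⟫_ℝ + L * ‖x + s • v - x‖ * ‖v‖ := by
          gcongr; exact hL _ (hmem s hs)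
      _ = ⟪f' (x + (0:ℝ) • v), v⟫_ℝ + L * ‖v‖ ^ 2 * s := by
          rw [hstep, zero_smul, add_zero]; ring
  have hy : x + v = y := add_sub_cancel x y
  have := le_add_deriv_add_of_deriv_le hderiv hslope
  rw [zero_smul, one_smul, add_zero, hy] at this
  linarith

theorem infDist_halfSpace_le_div_norm {v x₀ x : F} {c δ : ℝ} (hv : v ≠ 0) (hδ : 0 ≤ δ)
    (h : -(c + ⟪v, x - x₀⟫_ℝ) ≤ δ) :
    infDist x {y | 0 ≤ c + ⟪v, y - x₀⟫_ℝ} ≤ δ / ‖v‖ := by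
  have hv2 : ‖v‖ ^ 2 ≠ 0 := by positivity
  refine (infDist_le_dist_of_mem (y := x + (δ / ‖v‖ ^ 2) • v) ?_).trans_eq ?_
  · show 0 ≤ c + ⟪v, x + (δ / ‖v‖ ^ 2) • v - x₀⟫_ℝ
    rw [add_sub_right_comm, inner_add_right, real_inner_smul_right,
      real_inner_self_eq_norm_sq, div_mul_cancel₀ _ hv2]
    linarith
  · rw [dist_self_add_right, norm_smul, Real.norm_of_nonneg (by positivity)]
    field_simp

end

theorem dist_to_linearized_quadratic_general
    (T : ℝ)
    (g : Fin p → ℝ → E → ℝ)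
    (G : Fin p → ℝ → E → E)            -- spatial gradients ∇_q gᵢ
    (Hess : Fin p → ℝ → E → (E →L[ℝ] E))  -- spatial Hessians D²_q gᵢ
    (U : Fin p → ℝ → Set E)
    (a M : ℝ)
    -- gᵢ(t,·) ∈ C²(Uᵢ(t)) with gradient G and Hessian Hess
    (hgrad : ∀ i, ∀ t ∈ Icc (0:ℝ) T, ∀ q ∈ U i t, HasGradientAt (g i t) (G i t q) q)
    (hhess : ∀ i, ∀ t ∈ Icc (0:ℝ) T, ∀ q ∈ U i t, HasFDerivAt (G i t) (Hess i t q) q)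
    -- (A1) (lower bound)
    (ha : 0 < a) (hM : 0 < M)
    (hA1 : ∀ i, ∀ t ∈ Icc (0:ℝ) T, ∀ q ∈ U i t, a ≤ ‖G i t q‖)
    -- (A4)
    (hA4 : ∀ i, ∀ t ∈ Icc (0:ℝ) T, ∀ q ∈ U i t, ‖Hess i t q‖ ≤ M) :
    ∀ t ∈ Icc (0:ℝ) T, ∀ i : Fin p, ∀ q ∈ Qset g t, ∀ qt ∈ ⋂ j, U j t,
      segment ℝ qt q ⊆ U i t →
      infDist q (Qci g G i t qt) ≤ M / (2 * a) * ‖q - qt‖ ^ 2 := by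
  intro t ht i q hq qt _ hseg
  have hG : a ≤ ‖G i t qt‖ := hA1 i t ht qt (hseg (left_mem_segment ℝ qt q))
  have hLip : ∀ z ∈ segment ℝ qt q, ‖G i t z - G i t qt‖ ≤ M * ‖z - qt‖ := fun z hz =>
    (convex_segment qt q).norm_image_sub_le_of_norm_hasFDerivWithin_le
      (fun w hw => (hhess i t ht w (hseg hw)).hasFDerivWithinAt)
      (fun w hw => hA4 i t ht w (hseg hw)) (left_mem_segment ℝ qt q) hz
  have hdescent := le_add_inner_add_of_norm_gradient_sub_le
    (fun z hz => hgrad i t ht z (hseg hz)) hLip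
  calc infDist q (Qci g G i t qt) ≤ M / 2 * ‖q - qt‖ ^ 2 / ‖G i t qt‖ :=
        infDist_halfSpace_le_div_norm (norm_pos_iff.mp (ha.trans_le hG)) (by positivity)
          (by linarith [hq i])
    _ ≤ M / 2 * ‖q - qt‖ ^ 2 / a := by gcongr
    _ = M / (2 * a) * ‖q - qt‖ ^ 2 := by ring

/-- under (A1) and (A4), for `q ∈ Q(t)` and `q̃ ∈ U(t)` (with the
segment `[q̃, q]` contained in `Uᵢ(t)`), the distance from `q` to the linearized
constraint set satisfies `d_{Qcᵢ(t,q̃)}(q) ≤ (M/(2α)) |q - q̃|²`. -/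
theorem dist_to_linearized_quadratic
    (T : ℝ) (hT : 0 < T) (hd : 1 ≤ d) (hp : 1 ≤ p)
    (g : Fin p → ℝ → E → ℝ)
    (G : Fin p → ℝ → E → E)            -- spatial gradients ∇_q gᵢ
    (Hess : Fin p → ℝ → E → (E →L[ℝ] E))  -- spatial Hessians D²_q gᵢ
    (U : Fin p → ℝ → Set E)
    (a M : ℝ)
    -- gᵢ convex in the second variable, Q(t) nonempty
    (hconv : ∀ i, ∀ t ∈ Icc (0:ℝ) T, ConvexOn ℝ univ (g i t))
    (hQne : ∀ t ∈ Icc (0:ℝ) T, (Qset g t).Nonempty)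
    -- Uᵢ(t) open with Qᵢ(t) ⊆ Uᵢ(t)
    (hUopen : ∀ i, ∀ t ∈ Icc (0:ℝ) T, IsOpen (U i t))
    (hQU : ∀ i, ∀ t ∈ Icc (0:ℝ) T, {q : E | 0 ≤ g i t q} ⊆ U i t)
    -- gᵢ(t,·) ∈ C²(Uᵢ(t)) with gradient G and Hessian Hess
    (hgrad : ∀ i, ∀ t ∈ Icc (0:ℝ) T, ∀ q ∈ U i t, HasGradientAt (g i t) (G i t q) q)
    (hhess : ∀ i, ∀ t ∈ Icc (0:ℝ) T, ∀ q ∈ U i t, HasFDerivAt (G i t) (Hess i t q) q)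
    (hhesscont : ∀ i, ∀ t ∈ Icc (0:ℝ) T, ContinuousOn (Hess i t) (U i t))
    -- (A1) (lower bound)
    (ha : 0 < a) (hM : 0 < M)
    (hA1 : ∀ i, ∀ t ∈ Icc (0:ℝ) T, ∀ q ∈ U i t, a ≤ ‖G i t q‖)
    -- (A4)
    (hA4 : ∀ i, ∀ t ∈ Icc (0:ℝ) T, ∀ q ∈ U i t, ‖Hess i t q‖ ≤ M) :
    ∀ t ∈ Icc (0:ℝ) T, ∀ i : Fin p, ∀ q ∈ Qset g t, ∀ qt ∈ ⋂ j, U j t,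
      segment ℝ qt q ⊆ U i t →
      infDist q (Qci g G i t qt) ≤ M / (2 * a) * ‖q - qt‖ ^ 2 :=
  dist_to_linearized_quadratic_general T g G Hess U a M hgrad hhess ha hM hA1 hA4
end
end
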